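/- Let L be a symmetric Leibniz algebra over a field F such that the centralizer C_L(x) is a two-sided ideal of L for every x ∈ L. Then L^{(3)} = 0. -/

import Mathlib

/-!
The derived algebra `L' = L⁽¹⁾` is anticommutative against all of `L` (compare the right and
left Leibniz identities on `[x,[b,y]]`), hence `[a,a] = 0` on `L'` by polarizing
`[[x,y],[x,y]] = 0`. So each `a ∈ L'` lies in its own centralizer, and since that is an ideal,
`[a,[a,c]] = 0`; polarizing, left multiplications by elements of `L'` anticommute. With the right
Leibniz identity this gives `[[u,v],c] = 2[u,[v,c]]` for `u, v ∈ L'`. For `H = [[u,v],[w,z]]`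
this formula yields both `H = 4H` and `2H = 0`, so `H = 0` in every characteristic, i.e.
`L⁽²⁾` is abelian.
-/

/-- The derived series of an algebra: `derSeries br 0 = L` and
`derSeries br (k+1) = span {[u,v] | u, v ∈ derSeries br k}`. -/
def derSeries {F L : Type*} [Field F] [AddCommGroup L] [Module F L]
    (br : L →ₗ[F] L →ₗ[F] L) : ℕ → Submodule F L
  | 0 => ⊤
  | k + 1 => Submodule.span F
      {w : L | ∃ u ∈ derSeries br k, ∃ v ∈ derSeries br k, w = br u v}

section

variable {F L : Type*} [Field F] [AddCommGroup L] [Module F L] {br : L →ₗ[F] L →ₗ[F] L}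

theorem derSeries_succ (k : ℕ) :
    derSeries br (k + 1) = Submodule.map₂ br (derSeries br k) (derSeries br k) := by
  rw [Submodule.map₂_eq_span_image2, derSeries]
  congr 1
  ext w
  exact ⟨fun ⟨u, hu, v, hv, hw⟩ => ⟨u, hu, v, hv, hw.symm⟩,
    fun ⟨u, hu, v, hv, hw⟩ => ⟨u, hu, v, hv, hw.symm⟩⟩

theorem br_mem_derSeries_one (a b : L) : br a b ∈ derSeries br 1 := by
  rw [derSeries_succ]
  exact Submodule.apply_mem_map₂ br Submodule.mem_top Submodule.mem_top

theorem derSeries_add_two_eq_bot {k : ℕ}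
    (h : ∀ u ∈ derSeries br k, ∀ v ∈ derSeries br k, ∀ w ∈ derSeries br k,
      ∀ z ∈ derSeries br k, br (br u v) (br w z) = 0) :
    derSeries br (k + 2) = ⊥ := by
  suffices ∀ n ∈ derSeries br (k + 1), derSeries br (k + 1) ≤ LinearMap.ker (br.flip n) by
    rw [derSeries_succ, eq_bot_iff, Submodule.map₂_le]
    exact fun m hm n hn => this n hn hm
  intro n hn
  rw [derSeries_succ, Submodule.map₂_le]
  intro u hu v hv
  have : derSeries br (k + 1) ≤ LinearMap.ker (br (br u v)) := by
    rw [derSeries_succ, Submodule.map₂_le]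
    exact fun w hw z hz => h u hu v hv w hw z hz
  exact this hn

theorem br_br_anticomm_of_br_br_self {S : Submodule F L}
    (hS : ∀ x ∈ S, ∀ c : L, br x (br x c) = 0) :
    ∀ u ∈ S, ∀ v ∈ S, ∀ c : L, br u (br v c) = -br v (br u c) := by
  intro u hu v hv c
  have huv := hS (u + v) (add_mem hu hv) c
  simp only [map_add, LinearMap.add_apply, hS u hu, hS v hv, zero_add, add_zero] at huv
  exact eq_neg_of_add_eq_zero_right huv

structure IsSymmetricLeibniz (br : L →ₗ[F] L →ₗ[F] L) : Prop where
  right : ∀ x y z : L, br x (br y z) = br (br x y) z - br (br x z) y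
  left : ∀ x y z : L, br x (br y z) = br (br x y) z + br y (br x z)

namespace IsSymmetricLeibniz

theorem br_anticomm_of_mem_derSeries_one (h : IsSymmetricLeibniz br) {a : L}
    (ha : a ∈ derSeries br 1) (b : L) : br b a = -br a b := by
  suffices derSeries br 1 ≤ LinearMap.ker (br b + br.flip b) from
    eq_neg_of_add_eq_zero_left (this ha)
  rw [derSeries_succ, Submodule.map₂_le]
  intro x _ y _
  have := (h.right x b y).symm.trans (h.left x b y)
  simp only [LinearMap.mem_ker, LinearMap.add_apply, LinearMap.flip_apply]
  linear_combination (norm := abel) -this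

theorem br_self_eq_zero_of_mem_derSeries_one (h : IsSymmetricLeibniz br)
    (hsq : ∀ x y : L, br (br x y) (br x y) = 0) {a : L} (ha : a ∈ derSeries br 1) :
    br a a = 0 := by
  have hD : derSeries br 1 = Submodule.span F (Set.image2 (fun u v => br u v) ⊤ ⊤) := by
    rw [derSeries_succ, Submodule.map₂_eq_span_image2]; rfl
  rw [hD] at ha
  induction ha using Submodule.span_induction with
  | mem x hx =>
    obtain ⟨u, -, v, -, rfl⟩ := hx
    exact hsq u v
  | zero => simp
  | add x y hx _ ihx ihy =>
    have hyx := h.br_anticomm_of_mem_derSeries_one (hD ▸ hx) y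
    simp only [map_add, LinearMap.add_apply, ihx, ihy, hyx]
    abel
  | smul t x _ ih => simp only [map_smul, LinearMap.smul_apply, ih, smul_zero]

theorem br_br_eq_two_nsmul (h : IsSymmetricLeibniz br)
    (hanti : ∀ u ∈ derSeries br 1, ∀ v ∈ derSeries br 1, ∀ c : L,
      br u (br v c) = -br v (br u c))
    {u v : L} (hu : u ∈ derSeries br 1) (hv : v ∈ derSeries br 1) (c : L) :
    br (br u v) c = 2 • br u (br v c) := by
  have hright := h.right u v c
  have hcomm := h.br_anticomm_of_mem_derSeries_one (br_mem_derSeries_one u c) v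
  have huv := hanti u hu v hv c
  linear_combination (norm := module) -hright + hcomm - huv

theorem br_br_br_eq_zero (h : IsSymmetricLeibniz br)
    (hanti : ∀ u ∈ derSeries br 1, ∀ v ∈ derSeries br 1, ∀ c : L,
      br u (br v c) = -br v (br u c))
    {u v w z : L} (hu : u ∈ derSeries br 1) (hv : v ∈ derSeries br 1)
    (hw : w ∈ derSeries br 1) (hz : z ∈ derSeries br 1) :
    br (br u v) (br w z) = 0 := by
  have hm : br u v ∈ derSeries br 1 := br_mem_derSeries_one u v
  have h3 : br (br u v) (br w z) = 2 • br (br u v) (br w z) + 2 • br (br u v) (br w z) := by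
    have hright := h.right (br u v) w z
    rw [h.br_br_eq_two_nsmul hanti hm hw, h.br_br_eq_two_nsmul hanti hm hz,
      h.br_anticomm_of_mem_derSeries_one hw z, map_neg, smul_neg, sub_neg_eq_add] at hright
    exact hright
  have hswap : br w (br z (br u v)) = br u (br v (br w z)) :=
    calc br w (br z (br u v)) = -br w (br u (br z v)) := by rw [hanti z hz u hu, map_neg]
      _ = br u (br w (br z v)) := by rw [hanti w hw u hu, neg_neg]
      _ = br u (br v (br w z)) := by
        rw [h.br_anticomm_of_mem_derSeries_one hv z, map_neg, map_neg, hanti w hw v hv,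
          map_neg, neg_neg]
  have huv := h.br_br_eq_two_nsmul hanti hu hv (br w z)
  have hwz := h.br_br_eq_two_nsmul hanti hw hz (br u v)
  have hcomm := h.br_anticomm_of_mem_derSeries_one hm (br w z)
  -- With `H = [[u,v],[w,z]]`, `h3` gives `3 • H = 0` and the other facts give `2 • H = 0`.
  linear_combination (norm := module) -h3 - huv + hwz - hcomm + 2 • hswap

end IsSymmetricLeibniz

end

/-- A symmetric Leibniz algebra in which every centralizer
`C_L(x) = {y | [x,y] = [y,x] = 0}` is a two-sided ideal satisfies
`L⁽³⁾ = 0`. -/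
theorem stmt_18 (F : Type*) [Field F]
    (L : Type*) [AddCommGroup L] [Module F L]
    (br : L →ₗ[F] L →ₗ[F] L)
    (hright : ∀ x y z : L, br x (br y z) = br (br x y) z - br (br x z) y)
    (hleft : ∀ x y z : L, br x (br y z) = br (br x y) z + br y (br x z))
    (hsq : ∀ x y : L, br (br x y) (br x y) = 0)
    (hCL : ∀ x y : L, br x y = 0 → br y x = 0 → ∀ a : L,
      (br x (br y a) = 0 ∧ br (br y a) x = 0) ∧
        (br x (br a y) = 0 ∧ br (br a y) x = 0)) :
    derSeries br 3 = ⊥ := by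
  have h : IsSymmetricLeibniz br := ⟨hright, hleft⟩
  have hengel : ∀ x ∈ derSeries br 1, ∀ c : L, br x (br x c) = 0 := fun x hx c =>
    have hxx := h.br_self_eq_zero_of_mem_derSeries_one hsq hx
    (hCL x x hxx hxx c).1.1
  exact derSeries_add_two_eq_bot fun u hu v hv w hw z hz =>
    h.br_br_br_eq_zero (br_br_anticomm_of_br_br_self hengel) hu hv hw hz
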